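/- For every integer k ≥ 3 such that the Fermat number F_k = 2^(2^k) + 1 is prime, F_k is an ndh-number. -/

import Mathlib

/-- A harmonic number is a positive integer of the form 2^a * 3^b. -/
def IsHarmonic (n : ℕ) : Prop := ∃ a b : ℕ, n = 2 ^ a * 3 ^ b

/-- An ndh-number is a positive integer that cannot be written as a difference
h - k of two harmonic numbers h and k. -/
def IsNdh (n : ℕ) : Prop :=
  0 < n ∧ ¬ ∃ h k : ℕ, IsHarmonic h ∧ IsHarmonic k ∧ n + k = h

/-!
Let F = 2^E + 1 with E = 2^k ≥ 8 and suppose F + 2^c 3^d = 2^a 3^b. Since F is prime to 6,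
one of a, c and one of b, d vanish. The equation F + 3^d = 2^a fails modulo 8, and
F + 1 = 2^a 3^b fails modulo 4 unless a = 1, i.e. 3^b = 2^(E-1) + 1. In F + 2^c = 3^b,
reducing modulo 3 and then modulo 8 makes c and b even, so F = (3^m - 2^j)(3^m + 2^j), and
primality gives 3^m = 2^j + 1 with j = E - 1. Finally 3^m = 2^j + 1 is impossible for j ≥ 4:
as 3^4 ≡ 1 mod 80, 3^m is 1, 3, 9 or 27 mod 80, while 2^j + 1 is 1 mod 16 but not mod 5.
-/

theorem exponent_eq_zero_or_eq_zero {p n a c x y : ℕ} (hn : ¬ p ∣ n)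
    (h : n + x * p ^ c = y * p ^ a) : a = 0 ∨ c = 0 := by
  by_contra! hac
  have hpa : p ∣ y * p ^ a := dvd_mul_of_dvd_right (dvd_pow_self p hac.1) y
  have hpc : p ∣ x * p ^ c := dvd_mul_of_dvd_right (dvd_pow_self p hac.2) x
  exact hn ((Nat.dvd_add_left hpc).mp (h ▸ hpa))

theorem two_pow_mod_three (c : ℕ) : 2 ^ c % 3 = if Even c then 1 else 2 := by
  obtain ⟨q, rfl | rfl⟩ := Nat.even_or_odd' c <;>
    simp [pow_succ, pow_mul, Nat.mul_mod, Nat.pow_mod, parity_simps]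

theorem three_pow_mod_eight (b : ℕ) : 3 ^ b % 8 = if Even b then 1 else 3 := by
  obtain ⟨q, rfl | rfl⟩ := Nat.even_or_odd' b <;>
    simp [pow_succ, pow_mul, Nat.mul_mod, Nat.pow_mod, parity_simps]

theorem eq_add_one_of_prime_add_sq_eq_sq {p x y : ℕ} (hp : p.Prime) (h : p + x ^ 2 = y ^ 2) :
    y = x + 1 := by
  have hxy : x < y := by nlinarith [hp.pos]
  have hfac : p = (y + x) * (y - x) := by rw [← Nat.sq_sub_sq]; omega
  rcases hp.eq_one_or_self_of_dvd (y - x) (Dvd.intro_left _ hfac.symm) with h1 | h1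
  · omega
  · have : y + x = 1 := by
      rw [h1] at hfac
      exact (Nat.mul_eq_right hp.ne_zero).mp hfac.symm
    omega

theorem three_pow_ne_two_pow_add_one {m s : ℕ} (hs : 4 ≤ s) : 3 ^ m ≠ 2 ^ s + 1 := by
  intro h
  have h16 : 2 ^ 4 ∣ 2 ^ s := pow_dvd_pow 2 hs
  have h5 : ¬ 5 ∣ 2 ^ s := fun h5 => by
    have := Nat.prime_five.dvd_of_dvd_pow h5
    omega
  have hcycle : 3 ^ m % 80 = 3 ^ (m % 4) % 80 := by
    conv_lhs => rw [← Nat.div_add_mod m 4, pow_add, pow_mul, Nat.mul_mod, Nat.pow_mod]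
    norm_num
  have : m % 4 < 4 := Nat.mod_lt m (by norm_num)
  interval_cases m % 4 <;> omega

theorem two_pow_add_one_add_two_pow_ne_three_pow {E c b : ℕ} (hE : 5 ≤ E) (hEven : Even E)
    (hp : (2 ^ E + 1).Prime) : 2 ^ E + 1 + 2 ^ c ≠ 3 ^ b := by
  intro h
  have hE8 : 2 ^ 3 ∣ 2 ^ E := pow_dvd_pow 2 (by omega)
  have hc : Even c := by
    have h3E := two_pow_mod_three E
    have h3c := two_pow_mod_three c
    have h3b : 3 ∣ 3 ^ b := by
      refine dvd_pow_self 3 fun hb => ?_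
      rw [hb, pow_zero] at h
      have := Nat.one_le_two_pow (n := E)
      have := Nat.one_le_two_pow (n := c)
      omega
    rw [if_pos hEven] at h3E
    split_ifs at h3c with hc
    · exact hc
    · omega
  have hc0 : c ≠ 0 := by
    rintro rfl
    have := Nat.odd_iff.mp (Odd.pow (n := b) (by decide : Odd 3))
    omega
  have hb : Even b := by
    have h8b := three_pow_mod_eight b
    have h4c : 2 ^ 2 ∣ 2 ^ c := pow_dvd_pow 2 (by obtain ⟨j, rfl⟩ := hc; omega)
    split_ifs at h8b with hb
    · exact hb
    · omega
  obtain ⟨j, rfl⟩ := hc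
  obtain ⟨m, rfl⟩ := hb
  rw [← two_mul, ← two_mul, pow_mul', pow_mul'] at h
  have hm := eq_add_one_of_prime_add_sq_eq_sq hp h
  have hj : 2 ^ (j + 1) = 2 ^ E := by
    rw [hm] at h
    rw [pow_succ]
    nlinarith
  have := Nat.pow_right_injective le_rfl hj
  exact three_pow_ne_two_pow_add_one (by omega) hm

theorem two_pow_add_one_add_three_pow_ne_two_pow {E d a : ℕ} (hE : 3 ≤ E) :
    2 ^ E + 1 + 3 ^ d ≠ 2 ^ a := by
  intro h
  have hE8 : 2 ^ 3 ∣ 2 ^ E := pow_dvd_pow 2 hE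
  have h8d := three_pow_mod_eight d
  rcases lt_or_ge a 3 with ha | ha
  · have := Nat.one_le_two_pow (n := E)
    have := Nat.one_le_pow d 3 three_pos
    interval_cases a <;> omega
  · have : 2 ^ 3 ∣ 2 ^ a := pow_dvd_pow 2 ha
    split_ifs at h8d <;> omega

theorem two_pow_add_one_add_one_ne_two_pow_mul_three_pow {E a b : ℕ} (hE : 5 ≤ E) :
    2 ^ E + 1 + 1 ≠ 2 ^ a * 3 ^ b := by
  intro h
  have hE4 : 2 ^ 2 ∣ 2 ^ E := pow_dvd_pow 2 (by omega)
  rcases a with _ | _ | a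
  · have := Nat.odd_iff.mp (Odd.pow (n := b) (by decide : Odd 3))
    omega
  · obtain ⟨s, rfl⟩ : ∃ s, E = s + 1 := ⟨E - 1, by omega⟩
    rw [pow_succ, zero_add, pow_one] at h
    exact three_pow_ne_two_pow_add_one (m := b) (s := s) (by omega) (by omega)
  · have : 2 ^ 2 ∣ 2 ^ (a + 1 + 1) * 3 ^ b := Dvd.dvd.mul_right (pow_dvd_pow 2 (by omega)) _
    omega

/-- Every Fermat prime F_k = 2^(2^k) + 1 with k ≥ 3 is an ndh-number. -/
theorem ndh_fermat_prime (k : ℕ) (hk : 3 ≤ k) (hp : Nat.Prime (2 ^ 2 ^ k + 1)) :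
    IsNdh (2 ^ 2 ^ k + 1) := by
  have hE : 2 ^ 3 ≤ 2 ^ k := Nat.pow_le_pow_right two_pos hk
  have hEven : Even (2 ^ k) := Nat.even_pow.mpr ⟨even_two, by omega⟩
  generalize 2 ^ k = E at hE hEven hp ⊢
  have h2 : ¬ 2 ∣ 2 ^ E + 1 := by
    have := dvd_pow_self 2 (show E ≠ 0 by omega)
    omega
  have h3 : ¬ 3 ∣ 2 ^ E + 1 := by
    have := two_pow_mod_three E
    rw [if_pos hEven] at this
    omega
  refine ⟨by positivity, ?_⟩
  rintro ⟨_, _, ⟨a, b, rfl⟩, ⟨c, d, rfl⟩, h⟩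
  have hac := exponent_eq_zero_or_eq_zero h2 (by rwa [mul_comm (2 ^ c), mul_comm (2 ^ a)] at h)
  have hbd := exponent_eq_zero_or_eq_zero h3 h
  obtain rfl | rfl := hac <;> obtain rfl | rfl := hbd <;>
    simp only [pow_zero, one_mul, mul_one] at h
  · have := Nat.one_le_two_pow (n := E)
    omega
  · exact two_pow_add_one_add_two_pow_ne_three_pow (by omega) hEven hp h
  · exact two_pow_add_one_add_three_pow_ne_two_pow (by omega) h
  · exact two_pow_add_one_add_one_ne_two_pow_mul_three_pow (by omega) h
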